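/- Let 0 < ρ < 1 and let A = ρ·J be n×n where J is the upper bidiagonal matrix with 1's on the diagonal and superdiagonal (the Jordan block with eigenvalue 1), and let H = ρ·e_n be the n-th canonical basis vector scaled by ρ. Then the distance to uncontrollability d(A,H) = inf_{s ∈ ℂ} σ_min([A − sI, H]) equals ρ·sin(π/(n+1)). -/

import Mathlib

open Matrix Real

/-- Least singular value of a matrix `B` with `n` rows:
`σ_min(B) = inf { ‖Bᴴ v‖ : ‖v‖ = 1 }`. -/
noncomputable def sigmaMin {n : ℕ} {m : Type*} [Fintype m] (B : Matrix (Fin n) m ℂ) : ℝ :=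
  sInf {x : ℝ | ∃ v : EuclideanSpace ℂ (Fin n), ‖v‖ = 1 ∧ x = ‖Matrix.toEuclideanLin Bᴴ v‖}

/-- Eising's distance to uncontrollability:
`d(A,H) = inf_{s ∈ ℂ} σ_min [A - sI, H]`. -/
noncomputable def distUnc {n r : ℕ} (A : Matrix (Fin n) (Fin n) ℂ)
    (H : Matrix (Fin n) (Fin r) ℂ) : ℝ :=
  ⨅ s : ℂ, sigmaMin (Matrix.fromCols (A - s • (1 : Matrix (Fin n) (Fin n) ℂ)) H)

/-- The matrix `ρ·J_n(1)`: `ρ` on the diagonal and superdiagonal, zeros elsewhere. -/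
def rhoJordan (n : ℕ) (ρ : ℝ) : Matrix (Fin n) (Fin n) ℂ :=
  Matrix.of fun i j =>
    if (i : ℕ) = (j : ℕ) ∨ (j : ℕ) = (i : ℕ) + 1 then (ρ : ℂ) else 0

/-!
Write `θ = π / (n + 1)`. For a unit vector `v`, the entries of `[A - sI, H]ᴴ v` are
`conj (ρ - s) vᵢ + ρ vᵢ₋₁` (with `v₋₁ = vₙ = 0`). With `xᵢ = ‖vᵢ‖` and `r = ‖ρ - s‖` the reverse
triangle inequality gives `‖[A - sI, H]ᴴ v‖² ≥ r² + ρ² - 2 r ρ ∑ xᵢ xᵢ₊₁`, and the spectral bound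
`∑ xᵢ xᵢ₊₁ ≤ cos θ ∑ xᵢ²` for the path graph turns this into
`r² + ρ² - 2 r ρ cos θ = (r - ρ cos θ)² + ρ² sin² θ ≥ ρ² sin² θ`.
Every step is an equality for `s = ρ (1 + cos θ)` and `vᵢ ∝ sin ((i + 1) θ)`.
-/

open Finset ComplexConjugate

theorem two_mul_le_div_mul_sq_add_div_mul_sq {p q : ℝ} (hp : 0 < p) (hq : 0 < q) (x y : ℝ) :
    2 * x * y ≤ q / p * x ^ 2 + p / q * y ^ 2 := by
  rw [div_mul_eq_mul_div, div_mul_eq_mul_div, div_add_div _ _ hp.ne' hq.ne',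
    le_div_iff₀ (by positivity)]
  nlinarith [sq_nonneg (q * x - p * y)]

theorem sin_nat_mul_pi_div_pos {N k : ℕ} (hk0 : 0 < k) (hkN : k < N) :
    0 < sin (k * (π / N)) := by
  have hN : (0 : ℝ) < N := by exact_mod_cast hk0.trans hkN
  apply sin_pos_of_pos_of_lt_pi (by positivity)
  rw [mul_div_assoc', div_lt_iff₀ hN, mul_comm]
  exact mul_lt_mul_of_pos_left (by exact_mod_cast hkN) pi_pos

theorem sin_pi_div_nat_add_two_pos (m : ℕ) : 0 < sin (π / (m + 2)) := by
  simpa using sin_nat_mul_pi_div_pos one_pos (by omega : 1 < m + 2)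

theorem sin_add_sin_eq_two_mul_cos_mul_sin (θ : ℝ) (k : ℕ) :
    sin (k * θ) + sin ((k + 2) * θ) = 2 * cos θ * sin ((k + 1) * θ) := by
  rw [show (k : ℝ) * θ = (k + 1) * θ - θ by ring, show ((k : ℝ) + 2) * θ = (k + 1) * θ + θ by ring,
    sin_sub, sin_add]
  ring

section Bidiagonal

variable {m : ℕ}

/-- Weighted AM-GM on each edge, with weights from the Perron eigenvector
`k ↦ sin (k π / (m + 2))` of the path on `m + 1` vertices. -/
theorem sum_mul_succ_le_cos_mul_sum_sq (x : Fin (m + 1) → ℝ) :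
    ∑ j : Fin m, x j.castSucc * x j.succ ≤ cos (π / (m + 2)) * ∑ i, x i ^ 2 := by
  set θ := π / (m + 2)
  set s : ℕ → ℝ := fun k => sin (k * θ)
  have hs : ∀ k, 0 < k → k < m + 2 → 0 < s k := fun k hk0 hkm => by
    simpa [s, θ] using sin_nat_mul_pi_div_pos hk0 hkm
  have hs_top : s (m + 2) = 0 := by
    simp only [s, θ]; push_cast; rw [mul_div_cancel₀ _ (by positivity), sin_pi]
  have hweights : ∀ i : ℕ, i < m + 1 → s (i + 2) / s (i + 1) + s i / s (i + 1) = 2 * cos θ := by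
    intro i hi
    rw [← add_div, add_comm, div_eq_iff (hs _ (by omega) (by omega)).ne']
    simpa [s, add_assoc, one_add_one_eq_two] using sin_add_sin_eq_two_mul_cos_mul_sin θ i
  have hpair : ∀ j : Fin m, 2 * (x j.castSucc * x j.succ) ≤
      s (j + 2) / s (j + 1) * x j.castSucc ^ 2 + s (j + 1) / s (j + 2) * x j.succ ^ 2 := by
    intro j
    rw [← mul_assoc]
    exact two_mul_le_div_mul_sq_add_div_mul_sq (hs _ (by omega) (by omega))
      (hs _ (by omega) (by omega)) _ _
  have hlow : ∑ j : Fin m, s (j + 2) / s (j + 1) * x j.castSucc ^ 2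
      = ∑ i : Fin (m + 1), s (i + 2) / s (i + 1) * x i ^ 2 := by
    rw [Fin.sum_univ_castSucc (fun i : Fin (m + 1) => s (i + 2) / s (i + 1) * x i ^ 2)]
    simp [hs_top]
  have hhigh : ∑ j : Fin m, s (j + 1) / s (j + 2) * x j.succ ^ 2
      = ∑ i : Fin (m + 1), s i / s (i + 1) * x i ^ 2 := by
    rw [Fin.sum_univ_succ (fun i : Fin (m + 1) => s i / s (i + 1) * x i ^ 2)]
    simp [s, add_assoc, one_add_one_eq_two]
  have key : 2 * ∑ j : Fin m, x j.castSucc * x j.succ ≤ 2 * (cos θ * ∑ i, x i ^ 2) :=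
    calc 2 * ∑ j : Fin m, x j.castSucc * x j.succ
        ≤ ∑ j : Fin m, (s (j + 2) / s (j + 1) * x j.castSucc ^ 2
            + s (j + 1) / s (j + 2) * x j.succ ^ 2) := by
          rw [mul_sum]; exact sum_le_sum fun j _ => hpair j
      _ = ∑ i : Fin (m + 1), (s (i + 2) / s (i + 1) + s i / s (i + 1)) * x i ^ 2 := by
          simp only [sum_add_distrib, hlow, hhigh, add_mul]
      _ = 2 * (cos θ * ∑ i, x i ^ 2) := by
          simp only [hweights _ (Fin.is_lt _), mul_sum, mul_assoc]
  linarith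

theorem sum_sin_mul_sin_eq_cos_mul_sum_sin_sq :
    ∑ j : Fin m, sin ((j + 1) * (π / (m + 2))) * sin ((j + 2) * (π / (m + 2)))
      = cos (π / (m + 2)) * ∑ i : Fin (m + 1), sin ((i + 1) * (π / (m + 2))) ^ 2 := by
  set θ := π / (m + 2)
  have hbot := Fin.sum_univ_succ fun i : Fin (m + 1) => sin (i * θ) * sin ((i + 1) * θ)
  have htop := Fin.sum_univ_castSucc fun i : Fin (m + 1) => sin ((i + 1) * θ) * sin ((i + 2) * θ)
  have hπ : ((m : ℝ) + 2) * θ = π := mul_div_cancel₀ _ (by positivity)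
  simp only [Fin.val_zero, Fin.val_succ, Fin.val_castSucc, Fin.val_last, CharP.cast_eq_zero,
    zero_mul, sin_zero, push_cast, add_assoc, one_add_one_eq_two, hπ, sin_pi, mul_zero, add_zero,
    zero_add] at hbot htop
  have : 2 * cos θ * ∑ i : Fin (m + 1), sin ((i + 1) * θ) ^ 2
      = ∑ i : Fin (m + 1), sin (i * θ) * sin ((i + 1) * θ)
        + ∑ i : Fin (m + 1), sin ((i + 1) * θ) * sin ((i + 2) * θ) := by
    rw [mul_sum, ← sum_add_distrib]
    refine sum_congr rfl fun i _ => ?_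
    linear_combination -sin ((i + 1) * θ) * sin_add_sin_eq_two_mul_cos_mul_sin θ i
  linarith

theorem sq_add_sum_sub_sq_add_sq (r b : ℝ) (x : Fin (m + 1) → ℝ) :
    (r * x 0) ^ 2 + ∑ j : Fin m, (r * x j.succ - b * x j.castSucc) ^ 2 + (b * x (Fin.last m)) ^ 2
      = (r ^ 2 + b ^ 2) * ∑ i, x i ^ 2 - 2 * r * b * ∑ j : Fin m, x j.castSucc * x j.succ := by
  have hsucc := Fin.sum_univ_succ fun i => x i ^ 2
  have hcast := Fin.sum_univ_castSucc fun i => x i ^ 2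
  have hexpand : ∀ j : Fin m, (r * x j.succ - b * x j.castSucc) ^ 2
      = r ^ 2 * x j.succ ^ 2 + b ^ 2 * x j.castSucc ^ 2 - 2 * r * b * (x j.castSucc * x j.succ) :=
    fun j => by ring
  simp only [hexpand, sum_add_distrib, sum_sub_distrib, ← mul_sum]
  linear_combination (-r ^ 2) * hsucc - b ^ 2 * hcast

/-- `‖M v‖²` for the `(m + 2) × (m + 1)` lower bidiagonal matrix `M` with `γ` on the diagonal
and `b` below it. -/
noncomputable def bidiagonalNormSq (γ b : ℂ) (v : Fin (m + 1) → ℂ) : ℝ :=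
  ‖γ * v 0‖ ^ 2 + ∑ j : Fin m, ‖γ * v j.succ + b * v j.castSucc‖ ^ 2 + ‖b * v (Fin.last m)‖ ^ 2

theorem sq_mul_sum_le_bidiagonalNormSq (γ b : ℂ) (v : Fin (m + 1) → ℂ) :
    (‖b‖ * sin (π / (m + 2))) ^ 2 * ∑ i, ‖v i‖ ^ 2 ≤ bidiagonalNormSq γ b v := by
  set x := fun i => ‖v i‖
  have hterm : ∀ j : Fin m, (‖γ‖ * x j.succ - ‖b‖ * x j.castSucc) ^ 2
      ≤ ‖γ * v j.succ + b * v j.castSucc‖ ^ 2 := fun j => by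
    have := abs_norm_sub_norm_le (γ * v j.succ) (-(b * v j.castSucc))
    rw [norm_neg, sub_neg_eq_add, norm_mul, norm_mul] at this
    exact sq_le_sq.mpr (this.trans_eq (abs_norm _).symm)
  have hpath := sum_mul_succ_le_cos_mul_sum_sq x
  have hpyth := sin_sq_add_cos_sq (π / (m + 2))
  have hS : 0 ≤ ∑ i, x i ^ 2 := by positivity
  calc (‖b‖ * sin (π / (m + 2))) ^ 2 * ∑ i, x i ^ 2
      ≤ (‖γ‖ ^ 2 + ‖b‖ ^ 2) * ∑ i, x i ^ 2
          - 2 * ‖γ‖ * ‖b‖ * ∑ j : Fin m, x j.castSucc * x j.succ := by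
        rw [mul_pow, sin_sq]
        nlinarith [mul_nonneg (sq_nonneg (‖γ‖ - ‖b‖ * cos (π / (m + 2)))) hS,
          mul_nonneg (mul_nonneg (norm_nonneg γ) (norm_nonneg b)) (sub_nonneg.mpr hpath)]
    _ = (‖γ‖ * x 0) ^ 2 + ∑ j : Fin m, (‖γ‖ * x j.succ - ‖b‖ * x j.castSucc) ^ 2
          + (‖b‖ * x (Fin.last m)) ^ 2 := (sq_add_sum_sub_sq_add_sq _ _ x).symm
    _ ≤ bidiagonalNormSq γ b v := by
        unfold bidiagonalNormSq
        rw [norm_mul, norm_mul]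
        exact add_le_add_three le_rfl (sum_le_sum fun j _ => hterm j) le_rfl

theorem bidiagonalNormSq_neg_ofReal (r b : ℝ) (x : Fin (m + 1) → ℝ) :
    bidiagonalNormSq (-r : ℂ) b (fun i => x i)
      = (r ^ 2 + b ^ 2) * ∑ i, x i ^ 2 - 2 * r * b * ∑ j : Fin m, x j.castSucc * x j.succ := by
  have hreal : ∀ t : ℝ, ‖(t : ℂ)‖ ^ 2 = t ^ 2 := fun t => by
    rw [Complex.norm_real, Real.norm_eq_abs, sq_abs]
  have hentry : ∀ j : Fin m, -(r : ℂ) * x j.succ + b * x j.castSucc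
      = -((r * x j.succ - b * x j.castSucc : ℝ) : ℂ) := fun j => by push_cast; ring
  unfold bidiagonalNormSq
  simp only [hentry]
  simp only [norm_neg, neg_mul, ← Complex.ofReal_mul, hreal]
  exact sq_add_sum_sub_sq_add_sq r b x

end Bidiagonal

theorem exists_norm_eq_one_and_norm_apply_eq {𝕜 E F : Type*} [RCLike 𝕜] [NormedAddCommGroup E]
    [NormedSpace 𝕜 E] [NormedAddCommGroup F] [NormedSpace 𝕜 F] (T : E →ₗ[𝕜] F) {w : E}
    (hw : w ≠ 0) {c : ℝ} (h : ‖T w‖ = c * ‖w‖) : ∃ v : E, ‖v‖ = 1 ∧ ‖T v‖ = c := by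
  refine ⟨(‖w‖⁻¹ : 𝕜) • w, norm_smul_inv_norm hw, ?_⟩
  rw [map_smul, norm_smul, h, norm_inv, RCLike.norm_coe_norm, mul_comm c,
    inv_mul_cancel_left₀ (norm_ne_zero_iff.mpr hw)]

section SigmaMin

variable {n : ℕ} {ι : Type*} [Fintype ι] (B : Matrix (Fin n) ι ℂ)

theorem sigmaMin_nonneg : 0 ≤ sigmaMin B :=
  Real.sInf_nonneg (by rintro _ ⟨v, -, rfl⟩; positivity)

theorem sigmaMin_le {v : EuclideanSpace ℂ (Fin n)} (hv : ‖v‖ = 1) :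
    sigmaMin B ≤ ‖toEuclideanLin Bᴴ v‖ :=
  csInf_le ⟨0, by rintro _ ⟨w, -, rfl⟩; positivity⟩ ⟨v, hv, rfl⟩

theorem le_sigmaMin [NeZero n] {L : ℝ} (h : ∀ v, ‖v‖ = 1 → L ≤ ‖toEuclideanLin Bᴴ v‖) :
    L ≤ sigmaMin B :=
  le_csInf ⟨_, EuclideanSpace.single 0 1, by simp, rfl⟩ (by rintro _ ⟨v, hv, rfl⟩; exact h v hv)

end SigmaMin

noncomputable def integratorPencil (n : ℕ) (ρ : ℝ) (s : ℂ) : Matrix (Fin n) (Fin n ⊕ Fin 1) ℂ :=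
  fromCols (rhoJordan n ρ - s • 1) (of fun i (_ : Fin 1) => if (i : ℕ) = n - 1 then (ρ : ℂ) else 0)

section Pencil

variable {m : ℕ} (ρ : ℝ) (s : ℂ) (v : EuclideanSpace ℂ (Fin (m + 1)))

theorem integratorPencil_conjTranspose_apply_inl_zero :
    toEuclideanLin (integratorPencil (m + 1) ρ s)ᴴ v (.inl 0) = conj (ρ - s) * v 0 := by
  simp [integratorPencil, rhoJordan, mulVec, dotProduct, Fin.sum_univ_succ, one_apply]

theorem integratorPencil_conjTranspose_apply_inl_succ (j : Fin m) :
    toEuclideanLin (integratorPencil (m + 1) ρ s)ᴴ v (.inl j.succ)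
      = conj (ρ - s) * v j.succ + ρ * v j.castSucc := by
  simp only [integratorPencil, rhoJordan, toLpLin_apply, mulVec, dotProduct, conjTranspose_apply,
    fromCols_apply_inl, Matrix.sub_apply, Matrix.smul_apply, one_apply, of_apply]
  have hne : j.castSucc ≠ j.succ := Fin.castSucc_lt_succ.ne
  rw [sum_eq_add_of_mem j.succ j.castSucc (mem_univ _) (mem_univ _) hne.symm]
  · simp [hne]
  · rintro c - ⟨hc1, hc2⟩
    have : (c : ℕ) ≠ j + 1 := fun h => hc1 (Fin.ext (by simpa using h))
    have : (j : ℕ) ≠ c := fun h => hc2 (Fin.ext (by simpa using h.symm))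
    simp_all

theorem integratorPencil_conjTranspose_apply_inr (k : Fin 1) :
    toEuclideanLin (integratorPencil (m + 1) ρ s)ᴴ v (.inr k) = ρ * v (Fin.last m) := by
  simp [integratorPencil, mulVec, dotProduct, Fin.sum_univ_castSucc, (Fin.is_lt _).ne]

theorem norm_sq_integratorPencil_conjTranspose_apply :
    ‖toEuclideanLin (integratorPencil (m + 1) ρ s)ᴴ v‖ ^ 2
      = bidiagonalNormSq (conj (ρ - s)) ρ v := by
  rw [EuclideanSpace.norm_sq_eq, Fintype.sum_sum_type, Fin.sum_univ_succ, Fin.sum_univ_one,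
    integratorPencil_conjTranspose_apply_inl_zero, integratorPencil_conjTranspose_apply_inr]
  simp only [integratorPencil_conjTranspose_apply_inl_succ]
  rfl

theorem mul_sin_le_norm_integratorPencil_conjTranspose_apply (hρ : 0 ≤ ρ) (hv : ‖v‖ = 1) :
    ρ * sin (π / (m + 2)) ≤ ‖toEuclideanLin (integratorPencil (m + 1) ρ s)ᴴ v‖ := by
  have h := sq_mul_sum_le_bidiagonalNormSq (conj (ρ - s)) ρ v
  rw [← EuclideanSpace.norm_sq_eq, hv, ← norm_sq_integratorPencil_conjTranspose_apply,
    Complex.norm_real, Real.norm_of_nonneg hρ, one_pow, mul_one] at h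
  have hsin := sin_pi_div_nat_add_two_pos m
  exact (sq_le_sq₀ (by positivity) (norm_nonneg _)).mp h

theorem exists_norm_integratorPencil_conjTranspose_apply_eq (hρ : 0 ≤ ρ) :
    ∃ v : EuclideanSpace ℂ (Fin (m + 1)), ‖v‖ = 1 ∧
      ‖toEuclideanLin (integratorPencil (m + 1) ρ (ρ * (1 + cos (π / (m + 2)))))ᴴ v‖
        = ρ * sin (π / (m + 2)) := by
  set θ := π / (m + 2)
  set x : Fin (m + 1) → ℝ := fun i => sin ((i + 1) * θ)
  set w : EuclideanSpace ℂ (Fin (m + 1)) := WithLp.toLp 2 fun i => (x i : ℂ)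
  have hsin : 0 < sin θ := sin_pi_div_nat_add_two_pos m
  have hw : ‖w‖ ^ 2 = ∑ i, x i ^ 2 := by
    simp [w, EuclideanSpace.norm_sq_eq, Complex.norm_real]
  have hw0 : w ≠ 0 := by
    have hpos : 0 < ‖w‖ ^ 2 :=
      hw ▸ sum_pos' (fun i _ => sq_nonneg _) ⟨0, mem_univ _, by simpa [x] using pow_pos hsin 2⟩
    exact norm_ne_zero_iff.mp ((pow_ne_zero_iff two_ne_zero).mp hpos.ne')
  have hγ : conj ((ρ : ℂ) - ρ * (1 + cos θ)) = -(ρ * cos θ : ℝ) := by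
    rw [show (ρ : ℂ) - ρ * (1 + cos θ) = -(ρ * cos θ : ℝ) by push_cast; ring, map_neg,
      Complex.conj_ofReal]
  have hpath : ∑ j : Fin m, x j.castSucc * x j.succ = cos θ * ∑ i, x i ^ 2 := by
    simpa [x, add_assoc, one_add_one_eq_two] using sum_sin_mul_sin_eq_cos_mul_sum_sin_sq (m := m)
  have hsq : ‖toEuclideanLin (integratorPencil (m + 1) ρ (ρ * (1 + cos θ)))ᴴ w‖ ^ 2
      = (ρ * sin θ * ‖w‖) ^ 2 := by
    rw [norm_sq_integratorPencil_conjTranspose_apply, hγ, bidiagonalNormSq_neg_ofReal, hpath,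
      mul_pow _ ‖w‖, hw]
    linear_combination (-ρ ^ 2 * ∑ i, x i ^ 2) * sin_sq_add_cos_sq θ
  exact exists_norm_eq_one_and_norm_apply_eq _ hw0
    ((sq_eq_sq₀ (norm_nonneg _) (by positivity)).mp hsq)

end Pencil

theorem integrator_distance_to_uncontrollability_general {n : ℕ} (hn : 1 ≤ n) (ρ : ℝ)
    (hρ0 : 0 < ρ) :
    distUnc (rhoJordan n ρ)
      (Matrix.of fun i (_ : Fin 1) => if (i : ℕ) = n - 1 then (ρ : ℂ) else 0) =
      ρ * Real.sin (π / (n + 1)) := by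
  obtain ⟨m, rfl⟩ := Nat.exists_eq_add_of_le' hn
  rw [show π / (((m + 1 : ℕ) : ℝ) + 1) = π / (m + 2) by push_cast; ring]
  change ⨅ s, sigmaMin (integratorPencil (m + 1) ρ s) = _
  obtain ⟨v, hv, hv_eq⟩ := exists_norm_integratorPencil_conjTranspose_apply_eq ρ hρ0.le
  refine le_antisymm ?_ (le_ciInf fun s => le_sigmaMin _ fun v hv =>
    mul_sin_le_norm_integratorPencil_conjTranspose_apply ρ s v hρ0.le hv)
  calc ⨅ s, sigmaMin (integratorPencil (m + 1) ρ s)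
      ≤ sigmaMin (integratorPencil (m + 1) ρ (ρ * (1 + cos (π / (m + 2))))) :=
        ciInf_le ⟨0, Set.forall_mem_range.2 fun s => sigmaMin_nonneg _⟩ _
    _ ≤ _ := sigmaMin_le _ hv
    _ = _ := hv_eq

theorem integrator_distance_to_uncontrollability {n : ℕ} (hn : 1 ≤ n) (ρ : ℝ)
    (hρ0 : 0 < ρ) (hρ1 : ρ < 1) :
    distUnc (rhoJordan n ρ)
      (Matrix.of fun i (_ : Fin 1) => if (i : ℕ) = n - 1 then (ρ : ℂ) else 0) =
      ρ * Real.sin (π / (n + 1)) :=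
  integrator_distance_to_uncontrollability_general hn ρ hρ0
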